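/- Let m ≥ 1, let τ ∈ ℂ, and let α : Fin m → ℂ. Let U be an n×n complex unitary matrix whose minimal polynomial over ℂ is X^m − τ, and suppose that V := Σ_{i=0}^{m−1} α_i U^i is unitary. Then for every a with 0 ≤ a < m, Σ_{j=0}^{a−1} conj(τ)·conj(α_{(j−a) mod m})·α_j + Σ_{j=a}^{m−1} conj(α_{j−a})·α_j = δ_{a,0}, where δ_{a,0} is 1 if a = 0 and 0 otherwise. -/

import Mathlib

/-!
Since `U` is unitary and `U ^ m = τ`, we have `|τ| = 1` and `(Uᴴ) ^ i = conj τ • U ^ (m - i)`,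
so `Vᴴ * V` is again a combination of `1, U, …, U ^ (m - 1)`, whose coefficient at `U ^ a` is the
left-hand side of the claimed identity. As `X ^ m - τ` is the minimal polynomial, these powers
are linearly independent, and `Vᴴ * V = 1` pins down every coefficient.
-/

open Matrix Polynomial

section StarPow

variable {K A : Type*} [CommRing K] [StarRing K] [Ring A] [StarRing A] [Algebra K A]
  [StarModule K A] {u : A} {τ : K} {m : ℕ}

theorem star_pow_mul_pow_of_le (hu : star u * u = 1) {i j : ℕ} (h : i ≤ j) :
    star u ^ i * u ^ j = u ^ (j - i) := by
  rw [← Nat.add_sub_cancel' h, pow_add, ← mul_assoc, pow_mul_pow_eq_one i hu, one_mul,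
    Nat.add_sub_cancel_left]

theorem star_mul_self_smul_one (hu : star u * u = 1) (hum : u ^ m = τ • 1) :
    (star τ * τ) • (1 : A) = 1 := by
  have h := pow_mul_pow_eq_one m hu
  rwa [← star_pow, hum, star_smul, star_one, smul_mul_smul_comm, one_mul] at h

theorem star_pow_eq_smul_pow (hu : star u * u = 1) (hum : u ^ m = τ • 1) {k : ℕ} (hk : k ≤ m) :
    star u ^ k = star τ • u ^ (m - k) :=
  calc star u ^ k = star u ^ k * ((star τ * τ) • 1) := by
        rw [star_mul_self_smul_one hu hum, mul_one]
    _ = star τ • (star u ^ k * u ^ m) := by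
        rw [hum, mul_smul, mul_smul_comm, mul_smul_comm]
    _ = star τ • u ^ (m - k) := by rw [star_pow_mul_pow_of_le hu hk]

theorem star_pow_mul_pow_of_lt (hu : star u * u = 1) (hum : u ^ m = τ • 1) {i j : ℕ}
    (hji : j < i) (him : i ≤ m) : star u ^ i * u ^ j = star τ • u ^ (m + j - i) := by
  rw [← Nat.sub_add_cancel hji.le, pow_add, mul_assoc, pow_mul_pow_eq_one j hu, mul_one,
    star_pow_eq_smul_pow hu hum (by omega)]
  congr 2
  omega

theorem star_pow_mul_pow_fin (hu : star u * u = 1) (hum : u ^ m = τ • 1) (i j : Fin m) :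
    star u ^ (i : ℕ) * u ^ (j : ℕ) = (if i ≤ j then 1 else star τ) • u ^ ((j - i : Fin m) : ℕ) := by
  split_ifs with h
  · rw [one_smul, Fin.sub_val_of_le h, star_pow_mul_pow_of_le hu h]
  · rw [not_le] at h
    rw [Fin.coe_sub_iff_lt.mpr h, star_pow_mul_pow_of_lt hu hum h i.isLt.le]

def twistedCorrelation (τ : K) (α : Fin m → K) (a : Fin m) : K :=
  ∑ j, (if a ≤ j then 1 else star τ) * (star (α (j - a)) * α j)

theorem star_mul_self_sum_smul_pow [NeZero m] (hu : star u * u = 1) (hum : u ^ m = τ • 1)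
    (α : Fin m → K) :
    star (∑ i, α i • u ^ (i : ℕ)) * ∑ i, α i • u ^ (i : ℕ) =
      ∑ a, twistedCorrelation τ α a • u ^ (a : ℕ) :=
  calc star (∑ i, α i • u ^ (i : ℕ)) * ∑ i, α i • u ^ (i : ℕ)
      = ∑ j, ∑ i, ((if i ≤ j then 1 else star τ) * (star (α i) * α j)) •
          u ^ ((j - i : Fin m) : ℕ) := by
        simp only [star_sum, star_smul, star_pow, Finset.sum_mul_sum, smul_mul_smul_comm,
          star_pow_mul_pow_fin hu hum, smul_smul]
        rw [Finset.sum_comm]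
        simp only [mul_comm]
    _ = ∑ j, ∑ a, ((if a ≤ j then 1 else star τ) * (star (α (j - a)) * α j)) •
          u ^ (a : ℕ) := by
        refine Finset.sum_congr rfl fun j _ => (Fintype.sum_equiv (Equiv.subLeft j) _ _
          fun a => ?_).symm
        simp only [Equiv.subLeft_apply, sub_sub_cancel, Fin.sub_le_iff]
    _ = ∑ a, twistedCorrelation τ α a • u ^ (a : ℕ) := by
        rw [Finset.sum_comm]
        simp only [twistedCorrelation, Finset.sum_smul]

theorem twistedCorrelation_eq_add (τ : K) (α : Fin m → K) (a : Fin m) :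
    twistedCorrelation τ α a =
      (∑ j ∈ Finset.univ.filter (fun j : Fin m => (j : ℕ) < (a : ℕ)),
          star τ * star (α (j - a)) * α j) +
      ∑ j ∈ Finset.univ.filter (fun j : Fin m => (a : ℕ) ≤ (j : ℕ)), star (α (j - a)) * α j := by
  rw [twistedCorrelation,
    ← Finset.sum_filter_not_add_sum_filter _ (fun j : Fin m => (a : ℕ) ≤ (j : ℕ))]
  congr 1
  · refine Finset.sum_congr (by ext; simp) fun j hj => ?_
    have hja : ¬a ≤ j := Fin.not_le.mpr (Finset.mem_filter.mp hj).2
    rw [if_neg hja, mul_assoc]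
  · refine Finset.sum_congr rfl fun j hj => ?_
    have haj : a ≤ j := (Finset.mem_filter.mp hj).2
    rw [if_pos haj, one_mul]

end StarPow

theorem pow_eq_smul_one_of_minpoly_eq {K A : Type*} [Field K] [Ring A] [Algebra K A] {x : A}
    {m : ℕ} {τ : K} (h : minpoly K x = X ^ m - C τ) : x ^ m = τ • 1 := by
  have hx := minpoly.aeval K x
  rwa [h, map_sub, aeval_X_pow, aeval_C, sub_eq_zero, Algebra.algebraMap_eq_smul_one] at hx

theorem linearIndependent_pow_of_minpoly_eq {K A : Type*} [Field K] [Ring A] [Algebra K A]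
    {x : A} {m : ℕ} {τ : K} (h : minpoly K x = X ^ m - C τ) :
    LinearIndependent K fun i : Fin m => x ^ (i : ℕ) := by
  have hx := linearIndependent_pow (K := K) x
  rwa [h, natDegree_X_pow_sub_C] at hx

theorem stmt1_general {n m : ℕ} (τ : ℂ) (α : Fin m → ℂ)
    (U : Matrix (Fin n) (Fin n) ℂ)
    (hU : U * Uᴴ = 1 ∧ Uᴴ * U = 1)
    (hmin : minpoly ℂ U = X ^ m - Polynomial.C τ)
    (V : Matrix (Fin n) (Fin n) ℂ)
    (hV : V = ∑ i : Fin m, α i • U ^ (i : ℕ))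
    (hVunitary : V * Vᴴ = 1 ∧ Vᴴ * V = 1) :
    ∀ a : Fin m,
      (∑ j ∈ Finset.univ.filter (fun j : Fin m => (j : ℕ) < (a : ℕ)),
          (starRingEnd ℂ) τ * (starRingEnd ℂ) (α (j - a)) * α j) +
      (∑ j ∈ Finset.univ.filter (fun j : Fin m => (a : ℕ) ≤ (j : ℕ)),
          (starRingEnd ℂ) (α (j - a)) * α j) =
      if (a : ℕ) = 0 then 1 else 0 := by
  intro a
  have : NeZero m := ⟨a.pos.ne'⟩
  have hexpand : ∑ b : Fin m, twistedCorrelation τ α b • U ^ (b : ℕ) =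
      ∑ b : Fin m, (if b = 0 then (1 : ℂ) else 0) • U ^ (b : ℕ) := by
    rw [← star_mul_self_sum_smul_pow hU.2 (pow_eq_smul_one_of_minpoly_eq hmin), ← hV,
      star_eq_conjTranspose, hVunitary.2]
    simp
  have hcoeff := Fintype.linearIndependent_iffₛ.mp (linearIndependent_pow_of_minpoly_eq hmin)
    _ _ hexpand a
  simpa only [starRingEnd_apply, ← twistedCorrelation_eq_add, Fin.val_eq_zero_iff] using hcoeff

theorem stmt1 {n m : ℕ} (hm : 1 ≤ m) (τ : ℂ) (α : Fin m → ℂ)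
    (U : Matrix (Fin n) (Fin n) ℂ)
    (hU : U * Uᴴ = 1 ∧ Uᴴ * U = 1)
    (hmin : minpoly ℂ U = X ^ m - Polynomial.C τ)
    (V : Matrix (Fin n) (Fin n) ℂ)
    (hV : V = ∑ i : Fin m, α i • U ^ (i : ℕ))
    (hVunitary : V * Vᴴ = 1 ∧ Vᴴ * V = 1) :
    ∀ a : Fin m,
      (∑ j ∈ Finset.univ.filter (fun j : Fin m => (j : ℕ) < (a : ℕ)),
          (starRingEnd ℂ) τ * (starRingEnd ℂ) (α (j - a)) * α j) +
      (∑ j ∈ Finset.univ.filter (fun j : Fin m => (a : ℕ) ≤ (j : ℕ)),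
          (starRingEnd ℂ) (α (j - a)) * α j) =
      if (a : ℕ) = 0 then 1 else 0 :=
  stmt1_general τ α U hU hmin V hV hVunitary
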